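/- arXiv:1909.02353 — 2 statements merged into one kernel-verified Lean document; each statement's English description precedes it below -/
import Mathlib

section
/- Let (f,M) be a polymatroid. The cyclic flats of (f,M) form a lattice under inclusion: for any two cyclic flats C1,C2, the closure cl(C1∪C2) is a cyclic flat and is the smallest cyclic flat containing both C1 and C2, and there is a largest cyclic flat contained in C1∩C2 (namely the unique maximal cyclic flat inside the flat C1∩C2), which is the greatest lower bound of C1 and C2 among cyclic flats. -/
open scoped Classical

/-- A polymatroid on the finite ground set `M`: `f` is zero on the empty set,
nonnegative, monotone and submodular on subsets of `M`. -/
def IsPolymatroid {α : Type*} [DecidableEq α] (M : Finset α) (f : Finset α → ℝ) : Prop :=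
  f ∅ = 0 ∧
  (∀ A, A ⊆ M → 0 ≤ f A) ∧
  (∀ A B, A ⊆ B → B ⊆ M → f A ≤ f B) ∧
  (∀ A B, A ⊆ M → B ⊆ M → f (A ∪ B) + f (A ∩ B) ≤ f A + f B)

/-- `F` is a flat of the polymatroid `(f, M)`: every proper superset inside `M`
has strictly larger rank. -/
def IsFlat {α : Type*} [DecidableEq α] (M : Finset α) (f : Finset α → ℝ) (F : Finset α) : Prop :=
  F ⊆ M ∧ ∀ G, F ⊂ G → G ⊆ M → f F < f G

/-- The modular defect of a pair of subsets. -/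
def modularDefect {α : Type*} [DecidableEq α] (f : Finset α → ℝ) (A B : Finset α) : ℝ :=
  f A + f B - f (A ∩ B) - f (A ∪ B)

/-- A modular cut: a collection of flats, closed upwards among flats,
and closed under intersections of modular pairs. -/
def IsModularCut {α : Type*} [DecidableEq α] (M : Finset α) (f : Finset α → ℝ)
    (𝓜 : Set (Finset α)) : Prop :=
  (∀ F ∈ 𝓜, IsFlat M f F) ∧
  (∀ F₁ ∈ 𝓜, ∀ F₂, IsFlat M f F₂ → F₁ ⊆ F₂ → F₂ ∈ 𝓜) ∧
  (∀ F₁ ∈ 𝓜, ∀ F₂ ∈ 𝓜, modularDefect f F₁ F₂ = 0 → F₁ ∩ F₂ ∈ 𝓜)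

/-- A modular cut is principal if it is empty or the intersection of all of its
elements (taken inside the ground set `M`) is one of its elements. -/
def IsPrincipal {α : Type*} [DecidableEq α] (M : Finset α) (𝓜 : Set (Finset α)) : Prop :=
  𝓜 = ∅ ∨ (M.filter fun x => ∀ F ∈ 𝓜, x ∈ F) ∈ 𝓜

/-- `(g, N)` is an extension of the polymatroid `(f, M)`. -/
def IsExtension {α : Type*} [DecidableEq α] (M : Finset α) (f : Finset α → ℝ)
    (N : Finset α) (g : Finset α → ℝ) : Prop :=
  M ⊆ N ∧ IsPolymatroid N g ∧ ∀ A, A ⊆ M → g A = f A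

/-- `h` is an amalgam of the two extensions `(g₁, N₁)` and `(g₂, N₂)`. -/
def IsAmalgam {α : Type*} [DecidableEq α] (N₁ : Finset α) (g₁ : Finset α → ℝ)
    (N₂ : Finset α) (g₂ : Finset α → ℝ) (h : Finset α → ℝ) : Prop :=
  IsPolymatroid (N₁ ∪ N₂) h ∧ (∀ A, A ⊆ N₁ → h A = g₁ A) ∧ (∀ A, A ⊆ N₂ → h A = g₂ A)

/-- A polymatroid is sticky if every two extensions intersecting exactly
in the ground set have an amalgam. -/
def Sticky {α : Type*} [DecidableEq α] (M : Finset α) (f : Finset α → ℝ) : Prop :=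
  ∀ N₁ g₁ N₂ g₂, IsExtension M f N₁ g₁ → IsExtension M f N₂ g₂ → N₁ ∩ N₂ = M →
    ∃ h, IsAmalgam N₁ g₁ N₂ g₂ h

/-- A cyclic flat: a flat `C` such that for every `i ∈ C`, either `f {i} = 0`
or `f C - f (C \ {i}) < f {i}`. -/
def IsCyclicFlat {α : Type*} [DecidableEq α] (M : Finset α) (f : Finset α → ℝ)
    (C : Finset α) : Prop :=
  IsFlat M f C ∧ ∀ i ∈ C, f {i} = 0 ∨ f C - f (C \ {i}) < f {i}

/-! Every element of the closure `cl U = U ∪ {x ∈ M | f (U + x) = f U}` keeps the rank of `U`, and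
by submodularity an element raising the rank of `U` raises that of `cl U` too, so `cl U` is the
flat spanned by `U`. If `U` is a union of cyclic flats, then `cl U` is cyclic: an element of `U`
inherits the witness `f C - f (C - i) < f {i}` from a cyclic flat `C ∋ i` inside `U`, while
removing an element outside `U` does not lower the rank. The join of `C₁, C₂` is the closure of
`C₁ ∪ C₂`, and the meet is the closure of the union of all cyclic flats inside the flat
`C₁ ∩ C₂`. -/

section

variable {α : Type*} [DecidableEq α] {M : Finset α} {f : Finset α → ℝ}

namespace IsPolymatroid

lemma rank_mono (hf : IsPolymatroid M f) {A B : Finset α} (hAB : A ⊆ B) (hB : B ⊆ M) :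
    f A ≤ f B :=
  hf.2.2.1 A B hAB hB

lemma rank_add_le (hf : IsPolymatroid M f) {X Y A B : Finset α} (hX : X ⊆ M) (hY : Y ⊆ M)
    (hA : A ⊆ X ∩ Y) (hB : B ⊆ X ∪ Y) : f B + f A ≤ f X + f Y := by
  have hsub := hf.2.2.2 X Y hX hY
  have hB' := hf.rank_mono hB (Finset.union_subset hX hY)
  have hA' := hf.rank_mono hA (Finset.inter_subset_left.trans hX)
  linarith

lemma rank_union_eq_of_forall_insert (hf : IsPolymatroid M f) {A S : Finset α} (hA : A ⊆ M)
    (hS : S ⊆ M) (hSA : ∀ x ∈ S, f (insert x A) = f A) : f (A ∪ S) = f A := by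
  induction S using Finset.induction_on with
  | empty => simp
  | @insert x S _ ih =>
    have hxM : x ∈ M := hS (Finset.mem_insert_self x S)
    have hSM : S ⊆ M := (Finset.subset_insert x S).trans hS
    have hAS : f (A ∪ S) = f A := ih hSM fun y hy => hSA y (Finset.mem_insert_of_mem hy)
    have hxA : f (insert x A) = f A := hSA x (Finset.mem_insert_self x S)
    have hle : f (A ∪ insert x S) + f A ≤ f (A ∪ S) + f (insert x A) :=
      hf.rank_add_le (Finset.union_subset hA hSM) (Finset.insert_subset hxM hA)
        (by grind) (by grind)
    have hge : f A ≤ f (A ∪ insert x S) :=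
      hf.rank_mono Finset.subset_union_left (Finset.union_subset hA hS)
    linarith

end IsPolymatroid

namespace IsFlat

lemma rank_lt_insert (hf : IsPolymatroid M f) {F A : Finset α} (hF : IsFlat M f F)
    (hAF : A ⊆ F) {x : α} (hxM : x ∈ M) (hxF : x ∉ F) : f A < f (insert x A) := by
  have hlt : f F < f (insert x F) :=
    hF.2 _ (Finset.ssubset_insert hxF) (Finset.insert_subset hxM hF.1)
  have hle : f (insert x F) + f A ≤ f (insert x A) + f F :=
    hf.rank_add_le (Finset.insert_subset hxM (hAF.trans hF.1)) hF.1 (by grind) (by grind)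
  linarith

lemma inter (hf : IsPolymatroid M f) {F₁ F₂ : Finset α} (h₁ : IsFlat M f F₁)
    (h₂ : IsFlat M f F₂) : IsFlat M f (F₁ ∩ F₂) := by
  refine ⟨Finset.inter_subset_left.trans h₁.1, fun G hG hGM => ?_⟩
  obtain ⟨x, hxG, hx⟩ := Finset.exists_of_ssubset hG
  have hlt : f (F₁ ∩ F₂) < f (insert x (F₁ ∩ F₂)) := by
    by_cases hx₁ : x ∈ F₁
    · exact h₂.rank_lt_insert hf Finset.inter_subset_right (hGM hxG) (by grind)
    · exact h₁.rank_lt_insert hf Finset.inter_subset_left (hGM hxG) hx₁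
  have hle := hf.rank_mono (Finset.insert_subset hxG hG.subset) hGM
  linarith

end IsFlat

noncomputable def flatClosure (M : Finset α) (f : Finset α → ℝ) (A : Finset α) : Finset α :=
  A ∪ M.filter fun x => f (insert x A) = f A

lemma subset_flatClosure (A : Finset α) : A ⊆ flatClosure M f A :=
  Finset.subset_union_left

lemma flatClosure_subset_ground {A : Finset α} (hA : A ⊆ M) : flatClosure M f A ⊆ M :=
  Finset.union_subset hA (Finset.filter_subset _ _)

lemma rank_flatClosure (hf : IsPolymatroid M f) {A : Finset α} (hA : A ⊆ M) :
    f (flatClosure M f A) = f A :=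
  hf.rank_union_eq_of_forall_insert hA (Finset.filter_subset _ _) fun _ hx =>
    (Finset.mem_filter.mp hx).2

lemma isFlat_flatClosure (hf : IsPolymatroid M f) {A : Finset α} (hA : A ⊆ M) :
    IsFlat M f (flatClosure M f A) := by
  refine ⟨flatClosure_subset_ground hA, fun G hG hGM => ?_⟩
  obtain ⟨x, hxG, hx⟩ := Finset.exists_of_ssubset hG
  have hxM : x ∈ M := hGM hxG
  have hne : f (insert x A) ≠ f A := fun h =>
    hx (Finset.mem_union_right _ (Finset.mem_filter.mpr ⟨hxM, h⟩))
  have hge : f A ≤ f (insert x A) :=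
    hf.rank_mono (Finset.subset_insert x A) (Finset.insert_subset hxM hA)
  have hle : f (insert x A) ≤ f G :=
    hf.rank_mono (Finset.insert_subset hxG ((subset_flatClosure A).trans hG.subset)) hGM
  rw [rank_flatClosure hf hA]
  exact lt_of_lt_of_le (lt_of_le_of_ne hge hne.symm) hle

lemma flatClosure_subset_of_isFlat (hf : IsPolymatroid M f) {A F : Finset α}
    (hF : IsFlat M f F) (hAF : A ⊆ F) : flatClosure M f A ⊆ F := by
  refine Finset.union_subset hAF fun x hx => ?_
  obtain ⟨hxM, hfx⟩ := Finset.mem_filter.mp hx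
  by_contra hxF
  exact (hF.rank_lt_insert hf hAF hxM hxF).ne' hfx

lemma isCyclicFlat_flatClosure (hf : IsPolymatroid M f) {U : Finset α}
    (hU : ∀ i ∈ U, ∃ C, IsCyclicFlat M f C ∧ C ⊆ U ∧ i ∈ C) :
    IsCyclicFlat M f (flatClosure M f U) := by
  have hUM : U ⊆ M := fun i hi => by
    obtain ⟨C, hC, -, hiC⟩ := hU i hi
    exact hC.1.1 hiC
  set D := flatClosure M f U
  have hDM : D ⊆ M := flatClosure_subset_ground hUM
  refine ⟨isFlat_flatClosure hf hUM, fun i hiD => ?_⟩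
  by_cases hi : i ∈ U
  · obtain ⟨C, hC, hCU, hiC⟩ := hU i hi
    refine (hC.2 i hiC).imp_right fun hCi => ?_
    have hle : f D + f (C \ {i}) ≤ f C + f (D \ {i}) :=
      hf.rank_add_le hC.1.1 (Finset.sdiff_subset.trans hDM)
        (Finset.subset_inter Finset.sdiff_subset
          (Finset.sdiff_subset_sdiff (hCU.trans (subset_flatClosure U)) le_rfl))
        (by grind)
    linarith
  · have hfi : 0 ≤ f {i} := hf.2.1 _ (Finset.singleton_subset_iff.mpr (hDM hiD))
    have hU' : f U ≤ f (D \ {i}) :=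
      hf.rank_mono (by grind [subset_flatClosure]) (Finset.sdiff_subset.trans hDM)
    rcases hfi.eq_or_lt with h | h
    · exact Or.inl h.symm
    · right
      rw [rank_flatClosure hf hUM]
      linarith

lemma IsCyclicFlat.flatClosure_union (hf : IsPolymatroid M f) {C₁ C₂ : Finset α}
    (h₁ : IsCyclicFlat M f C₁) (h₂ : IsCyclicFlat M f C₂) :
    IsCyclicFlat M f (flatClosure M f (C₁ ∪ C₂)) :=
  isCyclicFlat_flatClosure hf fun _ hi => (Finset.mem_union.mp hi).elim
    (fun hi₁ => ⟨C₁, h₁, Finset.subset_union_left, hi₁⟩)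
    (fun hi₂ => ⟨C₂, h₂, Finset.subset_union_right, hi₂⟩)

lemma IsFlat.exists_greatest_isCyclicFlat_subset (hf : IsPolymatroid M f) {T : Finset α}
    (hT : IsFlat M f T) :
    ∃ E, IsCyclicFlat M f E ∧ E ⊆ T ∧ ∀ C, IsCyclicFlat M f C → C ⊆ T → C ⊆ E := by
  set U := T.filter fun x => ∃ C, IsCyclicFlat M f C ∧ C ⊆ T ∧ x ∈ C
  have hUT : U ⊆ T := Finset.filter_subset _ _
  have subset_U : ∀ C, IsCyclicFlat M f C → C ⊆ T → C ⊆ U := fun C hC hCT x hx =>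
    Finset.mem_filter.mpr ⟨hCT hx, C, hC, hCT, hx⟩
  refine ⟨flatClosure M f U, isCyclicFlat_flatClosure hf fun i hi => ?_,
    flatClosure_subset_of_isFlat hf hT hUT,
    fun C hC hCT => (subset_U C hC hCT).trans (subset_flatClosure U)⟩
  obtain ⟨-, C, hC, hCT, hiC⟩ := Finset.mem_filter.mp hi
  exact ⟨C, hC, subset_U C hC hCT, hiC⟩

end

/-- Cyclic flats form a lattice under inclusion: for cyclic flats
`C₁, C₂`, the closure `D = cl(C₁ ∪ C₂)` (the smallest flat containing `C₁ ∪ C₂`) is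
a cyclic flat and is the smallest cyclic flat containing both; moreover there is a
largest cyclic flat contained in `C₁ ∩ C₂`, which is the greatest lower bound of
`C₁` and `C₂` among cyclic flats. -/
theorem statement_3 {α : Type*} [DecidableEq α]
    (M : Finset α) (f : Finset α → ℝ) (hf : IsPolymatroid M f)
    (C₁ C₂ : Finset α) (h₁ : IsCyclicFlat M f C₁) (h₂ : IsCyclicFlat M f C₂)
    (D : Finset α) (hDflat : IsFlat M f D) (hDsup : C₁ ∪ C₂ ⊆ D)
    (hDmin : ∀ G, IsFlat M f G → C₁ ∪ C₂ ⊆ G → D ⊆ G) :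
    (IsCyclicFlat M f D ∧
      ∀ C', IsCyclicFlat M f C' → C₁ ⊆ C' → C₂ ⊆ C' → D ⊆ C') ∧
    (∃ E, IsCyclicFlat M f E ∧ E ⊆ C₁ ∩ C₂ ∧
      ∀ C', IsCyclicFlat M f C' → C' ⊆ C₁ → C' ⊆ C₂ → C' ⊆ E) := by
  have hUM : C₁ ∪ C₂ ⊆ M := Finset.union_subset h₁.1.1 h₂.1.1
  have hD : D = flatClosure M f (C₁ ∪ C₂) :=
    (hDmin _ (isFlat_flatClosure hf hUM) (subset_flatClosure _)).antisymm
      (flatClosure_subset_of_isFlat hf hDflat hDsup)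
  obtain ⟨E, hE, hET, hEmax⟩ := (h₁.1.inter hf h₂.1).exists_greatest_isCyclicFlat_subset hf
  refine ⟨⟨hD ▸ h₁.flatClosure_union hf h₂, fun C' hC' hC₁ hC₂ =>
    hDmin C' hC'.1 (Finset.union_subset hC₁ hC₂)⟩, E, hE, hET, fun C' hC' hC₁ hC₂ =>
    hEmax C' hC' (Finset.subset_inter hC₁ hC₂)⟩
end

section
/- Let (f,M) be a polymatroid, let F1,F2 be flats of (f,M) generating the modular cut 𝓜=𝓜(F1,F2), let S=F1∩F2, and assume S∉𝓜 and δ(F1,F2)=δ(𝓜)>0. Then there is a one-point extension (f1, M∪{a}) of (f,M) (with a∉M) that extracts the conditional common information of F1 and F2, i.e., Comm_{f1}(F1,F2;{a}|S)=0. -/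
open scoped Classical

/-- `f(I,J|K) = f(I∪K) + f(J∪K) - f(K) - f(I∪J∪K)`. -/
def condMI {α : Type*} [DecidableEq α] (f : Finset α → ℝ) (I J K : Finset α) : ℝ :=
  f (I ∪ K) + f (J ∪ K) - f K - f (I ∪ J ∪ K)

/-- `f(Y|A) = f(Y∪A) - f(A)`. -/
def condRk {α : Type*} [DecidableEq α] (f : Finset α → ℝ) (Y A : Finset α) : ℝ :=
  f (Y ∪ A) - f A

/-- The common information expression `Comm(A,B;Y)`. -/
def commExpr {α : Type*} [DecidableEq α] (f : Finset α → ℝ) (A B Y : Finset α) : ℝ :=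
  condMI f A B Y + condRk f Y A + condRk f Y B + condRk f Y (A ∪ B)

/-- The Ingleton expression `Ing(A,B;P,Q)`. -/
def ingExpr {α : Type*} [DecidableEq α] (f : Finset α → ℝ) (A B P Q : Finset α) : ℝ :=
  -(f A + f B - f (A ∪ B)) + condMI f A B P + condMI f A B Q + (f P + f Q - f (P ∪ Q))

/-- The conditional common information expression `Comm(A,B;Y|E)`. -/
def commExprCond {α : Type*} [DecidableEq α] (f : Finset α → ℝ) (A B Y E : Finset α) : ℝ :=
  condMI f A B (Y ∪ E) + condRk f Y (A ∪ E) + condRk f Y (B ∪ E) + condRk f Y (A ∪ B ∪ E)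

/-- The conditional Ingleton expression `Ing(A,B;P,Q|E)`. -/
def ingExprCond {α : Type*} [DecidableEq α] (f : Finset α → ℝ) (A B P Q E : Finset α) : ℝ :=
  -condMI f A B E + condMI f A B (P ∪ E) + condMI f A B (Q ∪ E) + condMI f P Q E


/-!
The extension is the one induced by the modular cut `𝓜` at height `d = δ(F₁, F₂)`: the new
point `a` lies in the closure of every flat of `𝓜` and adds `d` to the rank of everything else,
`f₁ (X ∪ {a}) = min (f X + d) (min_{F ∈ 𝓜} f (X ∪ F))`. Because `d` is at most the defect of
every pair of `𝓜` whose intersection leaves `𝓜`, this `f₁` is submodular. Since `S = F₁ ∩ F₂ ∉ 𝓜`,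
the same minimality gives `f (S ∪ F) ≥ f S + d` for all `F ∈ 𝓜`, so `a` adds exactly `d` to `S`
and nothing to `F₁` and `F₂`; with these three values `Comm_{f₁}(F₁, F₂; {a} | S)` vanishes.
-/

section

open Finset

variable {α : Type*} [DecidableEq α]

section Polymatroid

variable {M : Finset α} {f : Finset α → ℝ}

theorem IsPolymatroid.mono (hf : IsPolymatroid M f) {A B : Finset α} (hAB : A ⊆ B)
    (hB : B ⊆ M) : f A ≤ f B :=
  hf.2.2.1 A B hAB hB

theorem IsPolymatroid.submod (hf : IsPolymatroid M f) {A B : Finset α} (hA : A ⊆ M)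
    (hB : B ⊆ M) : f (A ∪ B) + f (A ∩ B) ≤ f A + f B :=
  hf.2.2.2 A B hA hB

theorem IsPolymatroid.exists_isFlat_superset_eq (hf : IsPolymatroid M f) {X : Finset α}
    (hX : X ⊆ M) : ∃ C, X ⊆ C ∧ IsFlat M f C ∧ f C = f X := by
  obtain ⟨C, hXC, ⟨hCmem, hCmax⟩⟩ :=
    (M.powerset.filter fun C => X ⊆ C ∧ f C = f X).exists_le_maximal (a := X) (by simp [hX])
  simp only [mem_filter, mem_powerset] at hCmem hCmax
  refine ⟨C, hXC, ⟨hCmem.1, fun G hCG hGM => ?_⟩, hCmem.2.2⟩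
  refine (hf.mono hCG.subset hGM).lt_of_ne fun hCG_eq => hCG.not_subset ?_
  exact hCmax ⟨hGM, hXC.trans hCG.subset, hCG_eq ▸ hCmem.2.2⟩ hCG.subset

theorem IsPolymatroid.add_modularDefect_le (hf : IsPolymatroid M f) {S G₁ G₂ : Finset α}
    (hG₁ : G₁ ⊆ M) (hG₂ : G₂ ⊆ M) (hS : S ⊆ G₁ ∩ G₂) :
    f S + modularDefect f G₁ G₂ ≤ f G₁ := by
  have hSG := hf.mono hS (inter_subset_left.trans hG₁)
  have hG₂G := hf.mono (subset_union_right (s₁ := G₁)) (union_subset hG₁ hG₂)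
  unfold modularDefect
  linarith

end Polymatroid

section OnePointExtension

def onePointExtension (a : α) (f h : Finset α → ℝ) (A : Finset α) : ℝ :=
  if a ∈ A then h (A.erase a) else f A

variable {a : α} {f h : Finset α → ℝ} {A : Finset α}

theorem onePointExtension_of_notMem (ha : a ∉ A) : onePointExtension a f h A = f A :=
  if_neg ha

theorem onePointExtension_of_mem (ha : a ∈ A) :
    onePointExtension a f h A = h (A.erase a) :=
  if_pos ha

theorem onePointExtension_insert (ha : a ∉ A) :
    onePointExtension a f h (insert a A) = h A := by
  rw [onePointExtension_of_mem (mem_insert_self a A), erase_insert ha]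

theorem isPolymatroid_onePointExtension {M : Finset α} (hf : IsPolymatroid M f)
    (hfh : ∀ X ⊆ M, f X ≤ h X)
    (hmono : ∀ X Y, X ⊆ Y → Y ⊆ M → h X ≤ h Y)
    (hsub : ∀ X Y, X ⊆ M → Y ⊆ M → h (X ∪ Y) + h (X ∩ Y) ≤ h X + h Y)
    (hmix : ∀ X Y, X ⊆ M → Y ⊆ M → h (X ∪ Y) + f (X ∩ Y) ≤ h X + f Y) :
    IsPolymatroid (insert a M) (onePointExtension a f h) := by
  have herase : ∀ {A}, A ⊆ insert a M → A.erase a ⊆ M := subset_insert_iff.mp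
  have hoff : ∀ {A}, A ⊆ insert a M → a ∉ A → A ⊆ M :=
    fun hA haA => (subset_insert_iff_of_notMem haA).mp hA
  refine ⟨?_, fun A hA => ?_, fun A B hAB hB => ?_, fun A B hA hB => ?_⟩
  · rw [onePointExtension_of_notMem (notMem_empty a)]
    exact hf.1
  · by_cases haA : a ∈ A
    · rw [onePointExtension_of_mem haA]
      exact (hf.2.1 _ (herase hA)).trans (hfh _ (herase hA))
    · rw [onePointExtension_of_notMem haA]
      exact hf.2.1 _ (hoff hA haA)
  · by_cases haB : a ∈ B
    · rw [onePointExtension_of_mem haB]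
      by_cases haA : a ∈ A
      · rw [onePointExtension_of_mem haA]
        exact hmono _ _ (erase_subset_erase a hAB) (herase hB)
      · rw [onePointExtension_of_notMem haA]
        exact (hf.mono (subset_erase.mpr ⟨hAB, haA⟩) (herase hB)).trans (hfh _ (herase hB))
    · rw [onePointExtension_of_notMem haB, onePointExtension_of_notMem fun h => haB (hAB h)]
      exact hf.mono hAB (hoff hB haB)
  · by_cases haA : a ∈ A <;> by_cases haB : a ∈ B
    · have hAB : (A ∩ B).erase a = A.erase a ∩ B.erase a := by
        rw [erase_inter, inter_erase, erase_idem]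
      rw [onePointExtension_of_mem haA, onePointExtension_of_mem haB,
        onePointExtension_of_mem (mem_union_left B haA),
        onePointExtension_of_mem (mem_inter.mpr ⟨haA, haB⟩), erase_union_distrib, hAB]
      exact hsub _ _ (herase hA) (herase hB)
    · have hAB : A ∩ B = A.erase a ∩ B := by rw [erase_inter, erase_eq_of_notMem]; simp [haB]
      rw [onePointExtension_of_mem haA, onePointExtension_of_notMem haB,
        onePointExtension_of_mem (mem_union_left B haA), onePointExtension_of_notMem
          (fun h => haB (mem_inter.mp h).2), erase_union_distrib, erase_eq_of_notMem haB, hAB]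
      exact hmix _ _ (herase hA) (hoff hB haB)
    · have hAB : A ∩ B = A ∩ B.erase a := by rw [inter_erase, erase_eq_of_notMem]; simp [haA]
      rw [onePointExtension_of_notMem haA, onePointExtension_of_mem haB,
        onePointExtension_of_mem (mem_union_right A haB), onePointExtension_of_notMem
          (fun h => haA (mem_inter.mp h).1), erase_union_distrib, erase_eq_of_notMem haA, hAB,
        union_comm, inter_comm]
      linarith [hmix _ _ (herase hB) (hoff hA haA)]
    · have haAB : a ∉ A ∪ B := by simp [haA, haB]
      rw [onePointExtension_of_notMem haA, onePointExtension_of_notMem haB,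
        onePointExtension_of_notMem haAB, onePointExtension_of_notMem fun h => haAB
          (mem_union_left B (mem_inter.mp h).1)]
      exact hf.submod (hoff hA haA) (hoff hB haB)

theorem commExprCond_onePointExtension_eq_zero {F₁ F₂ : Finset α} (ha₁ : a ∉ F₁) (ha₂ : a ∉ F₂)
    (h₁ : h F₁ = f F₁) (h₂ : h F₂ = f F₂)
    (hS : h (F₁ ∩ F₂) = f (F₁ ∩ F₂) + modularDefect f F₁ F₂) :
    commExprCond (onePointExtension a f h) F₁ F₂ {a} (F₁ ∩ F₂) = 0 := by
  have e₁ : F₁ ∪ F₁ ∩ F₂ = F₁ := union_eq_left.mpr inter_subset_left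
  have e₂ : F₂ ∪ F₁ ∩ F₂ = F₂ := union_eq_left.mpr inter_subset_right
  have e₃ : F₁ ∪ F₂ ∪ F₁ ∩ F₂ = F₁ ∪ F₂ :=
    union_eq_left.mpr (inter_subset_left.trans subset_union_left)
  have haU : a ∉ F₁ ∪ F₂ := by simp [ha₁, ha₂]
  have haS : a ∉ F₁ ∩ F₂ := by simp [ha₁]
  simp only [commExprCond, condMI, condRk, ← insert_eq, union_insert, e₁, e₂, e₃,
    onePointExtension_insert, ha₁, ha₂, haU, haS, onePointExtension_of_notMem, not_false_eq_true,
    h₁, h₂, hS, modularDefect]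
  ring

end OnePointExtension

section CutRank

variable {M : Finset α} {f : Finset α → ℝ} {𝓜 : Set (Finset α)} {d : ℝ} {X Y F : Finset α}

/-- The rank of `insert a X` in the extension of `(f, M)` by a point `a` that lies in the closure
of every member of `𝓜` and otherwise adds `d`. -/
noncomputable def cutRank (M : Finset α) (f : Finset α → ℝ) (𝓜 : Set (Finset α)) (d : ℝ)
    (X : Finset α) : ℝ :=
  (insert (f X + d) ((M.powerset.filter (· ∈ 𝓜)).image fun F => f (X ∪ F))).min'
    (insert_nonempty _ _)

theorem cutRank_le_add : cutRank M f 𝓜 d X ≤ f X + d :=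
  min'_le _ _ (mem_insert_self _ _)

theorem cutRank_le_union (hF : F ∈ 𝓜) (hFM : F ⊆ M) : cutRank M f 𝓜 d X ≤ f (X ∪ F) :=
  min'_le _ _ (mem_insert_of_mem (mem_image_of_mem _ (by simp [hF, hFM])))

theorem le_cutRank {c : ℝ} (h₁ : c ≤ f X + d) (h₂ : ∀ F ∈ 𝓜, F ⊆ M → c ≤ f (X ∪ F)) :
    c ≤ cutRank M f 𝓜 d X := by
  refine le_min' _ _ _ fun y hy => ?_
  rcases mem_insert.mp hy with rfl | hy
  · exact h₁
  · obtain ⟨F, hF, rfl⟩ := mem_image.mp hy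
    simp only [mem_filter, mem_powerset] at hF
    exact h₂ F hF.2 hF.1

theorem cutRank_eq_or :
    cutRank M f 𝓜 d X = f X + d ∨ ∃ F ∈ 𝓜, F ⊆ M ∧ cutRank M f 𝓜 d X = f (X ∪ F) := by
  have hmem : cutRank M f 𝓜 d X ∈
      insert (f X + d) ((M.powerset.filter (· ∈ 𝓜)).image fun F => f (X ∪ F)) :=
    min'_mem _ _
  rcases mem_insert.mp hmem with h | h
  · exact Or.inl h
  · obtain ⟨F, hF, hFX⟩ := mem_image.mp h
    simp only [mem_filter, mem_powerset] at hF
    exact Or.inr ⟨F, hF.2, hF.1, hFX.symm⟩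

theorem cutRank_eq_add (h : ∀ F ∈ 𝓜, F ⊆ M → f X + d ≤ f (X ∪ F)) :
    cutRank M f 𝓜 d X = f X + d :=
  cutRank_le_add.antisymm (le_cutRank le_rfl h)

variable (hf : IsPolymatroid M f)
include hf

theorem le_cutRank_self (hd : 0 ≤ d) (hX : X ⊆ M) : f X ≤ cutRank M f 𝓜 d X :=
  le_cutRank (by linarith) fun _ _ hFM => hf.mono subset_union_left (union_subset hX hFM)

theorem cutRank_eq_of_mem (hd : 0 ≤ d) (hF : F ∈ 𝓜) (hFM : F ⊆ M) :
    cutRank M f 𝓜 d F = f F :=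
  (union_self F ▸ cutRank_le_union hF hFM).antisymm (le_cutRank_self hf hd hFM)

theorem cutRank_mono (hXY : X ⊆ Y) (hY : Y ⊆ M) : cutRank M f 𝓜 d X ≤ cutRank M f 𝓜 d Y :=
  le_cutRank (cutRank_le_add.trans (by linarith [hf.mono hXY hY])) fun _ hF hFM =>
    (cutRank_le_union hF hFM).trans
      (hf.mono (union_subset_union hXY subset_rfl) (union_subset hY hFM))

theorem cutRank_union_add_inter_le (hX : X ⊆ M) (hY : Y ⊆ M) :
    cutRank M f 𝓜 d (X ∪ Y) + f (X ∩ Y) ≤ cutRank M f 𝓜 d X + f Y := by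
  rcases cutRank_eq_or (M := M) (f := f) (𝓜 := 𝓜) (d := d) (X := X) with hX' | ⟨F, hF, hFM, hX'⟩
  · linarith [cutRank_le_add (M := M) (f := f) (𝓜 := 𝓜) (d := d) (X := X ∪ Y), hf.submod hX hY]
  · have hU := cutRank_le_union (f := f) (d := d) (X := X ∪ Y) hF hFM
    rw [union_right_comm] at hU
    have hXF : X ∪ F ⊆ M := union_subset hX hFM
    linarith [hf.submod hXF hY, hf.mono (inter_subset_inter_right subset_union_left)
      (inter_subset_right.trans hY) (A := X ∩ Y) (B := (X ∪ F) ∩ Y)]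

theorem cutRank_submod (hflat : ∀ F ∈ 𝓜, IsFlat M f F)
    (hup : ∀ F ∈ 𝓜, ∀ G, IsFlat M f G → F ⊆ G → G ∈ 𝓜)
    (hdefect : ∀ G₁ ∈ 𝓜, ∀ G₂ ∈ 𝓜, G₁ ∩ G₂ ∉ 𝓜 → d ≤ modularDefect f G₁ G₂)
    (hX : X ⊆ M) (hY : Y ⊆ M) :
    cutRank M f 𝓜 d (X ∪ Y) + cutRank M f 𝓜 d (X ∩ Y) ≤
      cutRank M f 𝓜 d X + cutRank M f 𝓜 d Y := by
  have hI : cutRank M f 𝓜 d (X ∩ Y) ≤ f (X ∩ Y) + d := cutRank_le_add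
  rcases cutRank_eq_or (M := M) (f := f) (𝓜 := 𝓜) (d := d) (X := X) with hX' | ⟨F, hF, -, hX'⟩
  · have := cutRank_union_add_inter_le (𝓜 := 𝓜) (d := d) hf hY hX
    rw [union_comm, inter_comm] at this
    linarith
  rcases cutRank_eq_or (M := M) (f := f) (𝓜 := 𝓜) (d := d) (X := Y) with hY' | ⟨G, hG, -, hY'⟩
  · linarith [cutRank_union_add_inter_le (𝓜 := 𝓜) (d := d) hf hX hY]
  -- Replace `X ∪ F` and `Y ∪ G` by their closures, which are members of `𝓜` of the same rank.
  obtain ⟨C₁, hXC₁, hC₁, hfC₁⟩ :=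
    hf.exists_isFlat_superset_eq (union_subset hX (hflat F hF).1)
  obtain ⟨C₂, hYC₂, hC₂, hfC₂⟩ :=
    hf.exists_isFlat_superset_eq (union_subset hY (hflat G hG).1)
  have hC₁M : C₁ ∈ 𝓜 := hup F hF C₁ hC₁ (subset_union_right.trans hXC₁)
  have hC₂M : C₂ ∈ 𝓜 := hup G hG C₂ hC₂ (subset_union_right.trans hYC₂)
  have hXY : X ∪ Y ∪ C₁ ⊆ C₁ ∪ C₂ := union_subset
    (union_subset_union (subset_union_left.trans hXC₁) (subset_union_left.trans hYC₂))
    subset_union_left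
  have hU : cutRank M f 𝓜 d (X ∪ Y) ≤ f (C₁ ∪ C₂) :=
    (cutRank_le_union hC₁M hC₁.1).trans (hf.mono hXY (union_subset hC₁.1 hC₂.1))
  have hXYC : X ∩ Y ⊆ C₁ ∩ C₂ :=
    inter_subset_inter (subset_union_left.trans hXC₁) (subset_union_left.trans hYC₂)
  have hsub := hf.submod hC₁.1 hC₂.1
  by_cases hC : C₁ ∩ C₂ ∈ 𝓜
  · have := cutRank_le_union (f := f) (d := d) (X := X ∩ Y) hC (inter_subset_left.trans hC₁.1)
    rw [union_eq_right.mpr hXYC] at this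
    linarith
  · have := hdefect C₁ hC₁M C₂ hC₂M hC
    have := hf.mono hXYC (inter_subset_left.trans hC₁.1)
    unfold modularDefect at *
    linarith

end CutRank

section ModularCut

variable {M : Finset α} {f : Finset α → ℝ} {𝓜 : Set (Finset α)} {F₁ F₂ : Finset α}
  (hf : IsPolymatroid M f) (hflat : ∀ F ∈ 𝓜, IsFlat M f F)
  (hF₁ : F₁ ∈ 𝓜) (hF₂ : F₂ ∈ 𝓜) (hS : F₁ ∩ F₂ ∉ 𝓜)
  (hmin : ∀ G₁ ∈ 𝓜, ∀ G₂ ∈ 𝓜, G₁ ∩ G₂ ∉ 𝓜 →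
    modularDefect f F₁ F₂ ≤ modularDefect f G₁ G₂)
include hf hflat hF₁ hF₂ hS hmin

theorem add_modularDefect_le_of_mem {F : Finset α} (hF : F ∈ 𝓜) (hSF : F₁ ∩ F₂ ⊆ F) :
    f (F₁ ∩ F₂) + modularDefect f F₁ F₂ ≤ f F := by
  obtain ⟨G, hGF, ⟨hG, hSG⟩, hGmin⟩ :=
    exists_minimal_le_of_wellFoundedLT (fun G => G ∈ 𝓜 ∧ F₁ ∩ F₂ ⊆ G) F ⟨hF, hSF⟩
  -- By minimality `G ∩ Fᵢ ∈ 𝓜` forces `G ⊆ Fᵢ`; both cannot happen, as `F₁ ∩ F₂ ∉ 𝓜`.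
  have hsubset : ∀ {H}, H ∈ 𝓜 → F₁ ∩ F₂ ⊆ H → G ∩ H ∈ 𝓜 → G ⊆ H := fun hH hSH hGH =>
    (subset_inter_iff.mp (hGmin ⟨hGH, subset_inter hSG hSH⟩ inter_subset_left)).2
  have hGM := (hflat G hG).1
  have bound : ∀ {H}, H ∈ 𝓜 → F₁ ∩ F₂ ⊆ H → G ∩ H ∉ 𝓜 →
      f (F₁ ∩ F₂) + modularDefect f F₁ F₂ ≤ f F := fun {H} hH hSH hGH =>
    calc f (F₁ ∩ F₂) + modularDefect f F₁ F₂
        ≤ f (F₁ ∩ F₂) + modularDefect f G H := by linarith [hmin G hG _ hH hGH]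
      _ ≤ f G := hf.add_modularDefect_le hGM (hflat H hH).1 (subset_inter hSG hSH)
      _ ≤ f F := hf.mono hGF (hflat F hF).1
  by_cases h₁ : G ∩ F₁ ∈ 𝓜
  · by_cases h₂ : G ∩ F₂ ∈ 𝓜
    · have hGS : G ⊆ F₁ ∩ F₂ :=
        subset_inter (hsubset hF₁ inter_subset_left h₁) (hsubset hF₂ inter_subset_right h₂)
      exact absurd (subset_antisymm hGS hSG ▸ hG) hS
    · exact bound hF₂ inter_subset_right h₂
  · exact bound hF₁ inter_subset_left h₁

theorem add_modularDefect_le_union (hup : ∀ F ∈ 𝓜, ∀ G, IsFlat M f G → F ⊆ G → G ∈ 𝓜)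
    {F : Finset α} (hF : F ∈ 𝓜) :
    f (F₁ ∩ F₂) + modularDefect f F₁ F₂ ≤ f (F₁ ∩ F₂ ∪ F) := by
  obtain ⟨C, hSFC, hC, hfC⟩ := hf.exists_isFlat_superset_eq
    (union_subset (inter_subset_left.trans (hflat F₁ hF₁).1) (hflat F hF).1)
  rw [← hfC]
  exact add_modularDefect_le_of_mem hf hflat hF₁ hF₂ hS hmin
    (hup F hF C hC (subset_union_right.trans hSFC)) (subset_union_left.trans hSFC)

end ModularCut

end

theorem statement_16_general {α : Type*} [DecidableEq α] [Infinite α]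
    (M : Finset α) (f : Finset α → ℝ) (hf : IsPolymatroid M f)
    (F₁ F₂ : Finset α) (hF₁ : IsFlat M f F₁) (hF₂ : IsFlat M f F₂)
    (𝓜 : Set (Finset α)) (h𝓜 : IsModularCut M f 𝓜)
    (hF₁mem : F₁ ∈ 𝓜) (hF₂mem : F₂ ∈ 𝓜)
    (hS : F₁ ∩ F₂ ∉ 𝓜)
    (hδpos : 0 < modularDefect f F₁ F₂)
    (hmin : ∀ G₁ ∈ 𝓜, ∀ G₂ ∈ 𝓜, G₁ ∩ G₂ ∉ 𝓜 →
      modularDefect f F₁ F₂ ≤ modularDefect f G₁ G₂) :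
    ∃ a : α, a ∉ M ∧ ∃ f₁ : Finset α → ℝ,
      IsPolymatroid (insert a M) f₁ ∧
      (∀ A, A ⊆ M → f₁ A = f A) ∧
      commExprCond f₁ F₁ F₂ {a} (F₁ ∩ F₂) = 0 := by
  obtain ⟨a, ha⟩ := M.exists_notMem
  obtain ⟨hflat, hup, -⟩ := h𝓜
  have hnot : ∀ {A}, A ⊆ M → a ∉ A := fun hA h => ha (hA h)
  refine ⟨a, ha, onePointExtension a f (cutRank M f 𝓜 (modularDefect f F₁ F₂)),
    isPolymatroid_onePointExtension hf (fun _ => le_cutRank_self hf hδpos.le)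
      (fun _ _ => cutRank_mono hf) (fun _ _ => cutRank_submod hf hflat hup hmin)
      (fun _ _ => cutRank_union_add_inter_le hf),
    fun _ hA => onePointExtension_of_notMem (hnot hA),
    commExprCond_onePointExtension_eq_zero (hnot hF₁.1) (hnot hF₂.1)
      (cutRank_eq_of_mem hf hδpos.le hF₁mem hF₁.1) (cutRank_eq_of_mem hf hδpos.le hF₂mem hF₂.1)
      (cutRank_eq_add fun _ hF _ =>
        add_modularDefect_le_union hf hflat hF₁mem hF₂mem hS hmin hup hF)⟩

/-- Let `F₁, F₂` be flats generating the modular cut `𝓜`, let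
`S = F₁ ∩ F₂ ∉ 𝓜`, and suppose `δ(F₁,F₂) = δ(𝓜) > 0`.  Then `(f, M)` has a
one-point extension `(f₁, M ∪ {a})` extracting the conditional common information
of `F₁` and `F₂`: `Comm_{f₁}(F₁, F₂; {a} | S) = 0`. -/
theorem statement_16 {α : Type*} [DecidableEq α] [Infinite α]
    (M : Finset α) (f : Finset α → ℝ) (hf : IsPolymatroid M f)
    (F₁ F₂ : Finset α) (hF₁ : IsFlat M f F₁) (hF₂ : IsFlat M f F₂)
    (𝓜 : Set (Finset α)) (h𝓜 : IsModularCut M f 𝓜)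
    (hF₁mem : F₁ ∈ 𝓜) (hF₂mem : F₂ ∈ 𝓜)
    (hgen : ∀ 𝓝 : Set (Finset α), IsModularCut M f 𝓝 → F₁ ∈ 𝓝 → F₂ ∈ 𝓝 → 𝓜 ⊆ 𝓝)
    (hS : F₁ ∩ F₂ ∉ 𝓜)
    (hδpos : 0 < modularDefect f F₁ F₂)
    (hmin : ∀ G₁ ∈ 𝓜, ∀ G₂ ∈ 𝓜, G₁ ∩ G₂ ∉ 𝓜 →
      modularDefect f F₁ F₂ ≤ modularDefect f G₁ G₂) :
    ∃ a : α, a ∉ M ∧ ∃ f₁ : Finset α → ℝ,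
      IsPolymatroid (insert a M) f₁ ∧
      (∀ A, A ⊆ M → f₁ A = f A) ∧
      commExprCond f₁ F₁ F₂ {a} (F₁ ∩ F₂) = 0 :=
  statement_16_general M f hf F₁ F₂ hF₁ hF₂ 𝓜 h𝓜 hF₁mem hF₂mem hS hδpos hmin
end
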